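/- arXiv:1905.06571 — 3 statements merged into one kernel-verified Lean document; each statement's English description precedes it below -/
import Mathlib

section
/- Fix integers m ≥ 2, N ≥ 1, points x₁, …, x_{2^m} ∈ ℝ^N and y₁, …, y_{2^m} ∈ ℝ^N, a finite Borel measure μ on ℝ^N, and let Θ = { t ∈ ℝ^{2^m} : t_j ≥ 0, t_{2i−1} + t_{2i} = 2^{1−m} for all 1 ≤ i ≤ 2^{m−1}, Σ_j t_j·δ_{x_j} = μ }. For t ∈ Θ define T(t) = { s ∈ Θ : for all 0 ≤ k ≤ m−2 and 1 ≤ i ≤ 2^k, Y_i^{(k)}(s) is parallel to X_i^{(k)}(t) }. Then for every t ∈ Θ, the set T(t) is convex. -/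
open MeasureTheory

/- Throughout, `m = p + 1` (so `m ≥ 2` corresponds to `1 ≤ p`); vectors of
`ℝ^{2^m}` are indexed by `Fin (2^(p+1))`, and the pair `(t_{2i−1}, t_{2i})`
(1-based) corresponds to the 0-based indices `(lo i, hi i)`. -/

/-- 0-based index `2i` of the 1-based odd index `2i−1`. -/
def lo {n : ℕ} (i : Fin n) : Fin (n * 2) := ⟨2 * i.1, by have := i.2; omega⟩

/-- 0-based index `2i+1` of the 1-based even index `2i`. -/
def hi {n : ℕ} (i : Fin n) : Fin (n * 2) := ⟨2 * i.1 + 1, by have := i.2; omega⟩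

/-- The level `m−1 = p` vectors: `x_i^{(m−1)}(t) = (1−λ_i)·x_{2i−1} + λ_i·x_{2i}`
with `λ_i = λ_i^{(m−1)}(t) = 2^{m−1}·t_{2i}`. -/
noncomputable def leaf {N p : ℕ} (x : Fin (2 ^ (p + 1)) → Fin N → ℝ)
    (t : Fin (2 ^ (p + 1)) → ℝ) (r : Fin (2 ^ p)) : Fin N → ℝ :=
  (1 - 2 ^ p * t (hi r)) • x (lo r) + (2 ^ p * t (hi r)) • x (hi r)

/-- The recursively defined vectors `x_i^{(k)}(t)`: for `k ≤ p = m−1` they are the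
(dyadic) averages of the level `m−1` vectors below node `i` of level `k`
(this closed form is exactly the recursion
`x_i^{(k)} = (x_{2i−1}^{(k+1)} + x_{2i}^{(k+1)})/2` for `0 ≤ k ≤ m−2` started at
level `m−1` from `leaf`); for `k = m = p+1` they are the given points `x_j`. -/
noncomputable def lev {N p : ℕ} (x : Fin (2 ^ (p + 1)) → Fin N → ℝ)
    (t : Fin (2 ^ (p + 1)) → ℝ) (k : ℕ) (i : Fin (2 ^ k)) : Fin N → ℝ :=
  if h : k ≤ p then
    ((2 : ℝ) ^ (p - k))⁻¹ • ∑ j : Fin (2 ^ (p - k)),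
      leaf x t ⟨i.1 * 2 ^ (p - k) + j.1, by
        have h1 : i.1 + 1 ≤ 2 ^ k := i.2
        have h2 := j.2
        calc i.1 * 2 ^ (p - k) + j.1 < (i.1 + 1) * 2 ^ (p - k) := by nlinarith
          _ ≤ 2 ^ k * 2 ^ (p - k) := Nat.mul_le_mul_right _ h1
          _ = 2 ^ p := by rw [← pow_add]; congr 1; omega⟩
  else x ⟨i.1 % 2 ^ (p + 1), Nat.mod_lt _ (Nat.pow_pos (by omega))⟩

/-- The decomposition directions `X_i^{(k)}(t) = x_{2i−1}^{(k+1)}(t) − x_{2i}^{(k+1)}(t)`. -/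
noncomputable def dir {N p : ℕ} (x : Fin (2 ^ (p + 1)) → Fin N → ℝ)
    (t : Fin (2 ^ (p + 1)) → ℝ) (k : ℕ) (i : Fin (2 ^ k)) : Fin N → ℝ :=
  lev x t (k + 1) (lo i) - lev x t (k + 1) (hi i)

/-- Two vectors of `ℝ^N` are parallel: `X_a·Y_b = X_b·Y_a` for all components. -/
def IsParallel {N : ℕ} (X Y : Fin N → ℝ) : Prop :=
  ∀ a b : Fin N, X a * Y b = X b * Y a

/-- The set `Θ`: nonnegative weights with dyadic pair sums `2^{1−m} = (2^p)⁻¹`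
representing the measure `μ` as `Σ_j t_j·δ_{x_j}`. -/
def Theta {N p : ℕ} (x : Fin (2 ^ (p + 1)) → Fin N → ℝ) (μ : Measure (Fin N → ℝ)) :
    Set (Fin (2 ^ (p + 1)) → ℝ) :=
  {t | (∀ j, 0 ≤ t j) ∧ (∀ i : Fin (2 ^ p), t (lo i) + t (hi i) = ((2 : ℝ) ^ p)⁻¹) ∧
    (∑ j, ENNReal.ofReal (t j) • Measure.dirac (x j)) = μ}

/-- The set-valued map `T`: those `s ∈ Θ` whose decomposition directions
`Y_i^{(k)}(s)` (built from the points `y`) are parallel to the decomposition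
directions `X_i^{(k)}(t)` (built from the points `x`), for all `0 ≤ k ≤ m−2`. -/
def Tmap {N p : ℕ} (x y : Fin (2 ^ (p + 1)) → Fin N → ℝ)
    (μ : Measure (Fin N → ℝ)) (t : Fin (2 ^ (p + 1)) → ℝ) :
    Set (Fin (2 ^ (p + 1)) → ℝ) :=
  {s | s ∈ Theta x μ ∧
    ∀ k < p, ∀ i : Fin (2 ^ k), IsParallel (dir y s k i) (dir x t k i)}

/-! The constraints defining `Θ` are linear in the weights, and the directions `Y_i^{(k)}(s)`
depend affinely on `s`, while being parallel to a fixed vector is a linear condition.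
Hence `T(t)` is an intersection of convex sets. -/

section ConvexCombination

variable {N p : ℕ} (y : Fin (2 ^ (p + 1)) → Fin N → ℝ) {s u : Fin (2 ^ (p + 1)) → ℝ}
  {a b : ℝ}

lemma leaf_smul_add_smul (hab : a + b = 1) (r : Fin (2 ^ p)) :
    leaf y (a • s + b • u) r = a • leaf y s r + b • leaf y u r := by
  have hi_apply : (a • s + b • u) (hi r) = a * s (hi r) + b * u (hi r) := rfl
  funext c
  simp only [leaf, hi_apply, Pi.add_apply, Pi.smul_apply, smul_eq_mul]
  linear_combination -(y (lo r) c) * hab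

lemma lev_smul_add_smul (hab : a + b = 1) (k : ℕ) (i : Fin (2 ^ k)) :
    lev y (a • s + b • u) k i = a • lev y s k i + b • lev y u k i := by
  unfold lev
  split_ifs
  · simp only [leaf_smul_add_smul y hab, Finset.sum_add_distrib, ← Finset.smul_sum, smul_add,
      smul_comm _ a, smul_comm _ b]
  · rw [← add_smul, hab, one_smul]

lemma dir_smul_add_smul (hab : a + b = 1) (k : ℕ) (i : Fin (2 ^ k)) :
    dir y (a • s + b • u) k i = a • dir y s k i + b • dir y u k i := by
  rw [dir, dir, dir, lev_smul_add_smul y hab (k + 1) (lo i),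
    lev_smul_add_smul y hab (k + 1) (hi i)]
  module

end ConvexCombination

lemma IsParallel.smul_add_smul {n : ℕ} {X X' Y : Fin n → ℝ} (h : IsParallel X Y)
    (h' : IsParallel X' Y) (a b : ℝ) : IsParallel (a • X + b • X') Y := by
  intro c d
  simp only [Pi.add_apply, Pi.smul_apply, smul_eq_mul]
  linear_combination a * h c d + b * h' c d

lemma sum_ofReal_smul_add_smul {ι α : Type*} [Fintype ι] [MeasurableSpace α]
    (ν : ι → Measure α) {s u : ι → ℝ} (hs : 0 ≤ s) (hu : 0 ≤ u) {a b : ℝ} (ha : 0 ≤ a)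
    (hb : 0 ≤ b) :
    ∑ j, ENNReal.ofReal ((a • s + b • u) j) • ν j =
      ENNReal.ofReal a • ∑ j, ENNReal.ofReal (s j) • ν j +
        ENNReal.ofReal b • ∑ j, ENNReal.ofReal (u j) • ν j := by
  simp only [Finset.smul_sum, smul_smul, ← Finset.sum_add_distrib, ← add_smul]
  refine Finset.sum_congr rfl fun j _ => ?_
  rw [Pi.add_apply, Pi.smul_apply, Pi.smul_apply, smul_eq_mul, smul_eq_mul,
    ENNReal.ofReal_add (mul_nonneg ha (hs j)) (mul_nonneg hb (hu j)),
    ENNReal.ofReal_mul ha, ENNReal.ofReal_mul hb]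

lemma convex_theta {N p : ℕ} (x : Fin (2 ^ (p + 1)) → Fin N → ℝ) (μ : Measure (Fin N → ℝ)) :
    Convex ℝ (Theta x μ) := by
  rintro s ⟨hs0, hs_pair, hs_meas⟩ u ⟨hu0, hu_pair, hu_meas⟩ a b ha hb hab
  refine ⟨fun j => ?_, fun i => ?_, ?_⟩
  · simp only [Pi.add_apply, Pi.smul_apply, smul_eq_mul]
    exact add_nonneg (mul_nonneg ha (hs0 j)) (mul_nonneg hb (hu0 j))
  · change a * s (lo i) + b * u (lo i) + (a * s (hi i) + b * u (hi i)) = _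
    linear_combination a * hs_pair i + b * hu_pair i + ((2 : ℝ) ^ p)⁻¹ * hab
  · rw [sum_ofReal_smul_add_smul _ hs0 hu0 ha hb, hs_meas, hu_meas, ← add_smul,
      ← ENNReal.ofReal_add ha hb, hab, ENNReal.ofReal_one, one_smul]

lemma convex_setOf_isParallel_dir {N p : ℕ} (y : Fin (2 ^ (p + 1)) → Fin N → ℝ) (k : ℕ)
    (i : Fin (2 ^ k)) (X : Fin N → ℝ) : Convex ℝ {s | IsParallel (dir y s k i) X} := by
  intro s hs u hu a b _ _ hab
  simp only [Set.mem_ofPred_eq, dir_smul_add_smul y hab]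
  exact hs.smul_add_smul hu a b

theorem tmap_convex_general
    (p N : ℕ)
    (x y : Fin (2 ^ (p + 1)) → Fin N → ℝ)
    (μ : Measure (Fin N → ℝ)) :
    ∀ t ∈ Theta x μ, Convex ℝ (Tmap x y μ t) := by
  intro t _ s hs u hu a b ha hb hab
  exact ⟨convex_theta x μ hs.1 hu.1 ha hb hab, fun k hk i =>
    convex_setOf_isParallel_dir y k i _ (hs.2 k hk i) (hu.2 k hk i) ha hb hab⟩

/-- Convexity of the images of the map `T`. -/
theorem tmap_convex
    (p N : ℕ) (hp : 1 ≤ p) (hN : 1 ≤ N)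
    (x y : Fin (2 ^ (p + 1)) → Fin N → ℝ)
    (μ : Measure (Fin N → ℝ)) [IsFiniteMeasure μ] :
    ∀ t ∈ Theta x μ, Convex ℝ (Tmap x y μ t) :=
  tmap_convex_general p N x y μ
end

section
/- Fix integers m ≥ 2, N ≥ 1, points x₁, …, x_{2^m} ∈ ℝ^N and y₁, …, y_{2^m} ∈ ℝ^N, a finite Borel measure μ on ℝ^N, and let Θ = { t ∈ ℝ^{2^m} : t_j ≥ 0, t_{2i−1} + t_{2i} = 2^{1−m} for all 1 ≤ i ≤ 2^{m−1}, Σ_j t_j·δ_{x_j} = μ }. For t ∈ Θ define T(t) = { s ∈ Θ : for all 0 ≤ k ≤ m−2 and 1 ≤ i ≤ 2^k, Y_i^{(k)}(s) is parallel to X_i^{(k)}(t) }. Then the set-valued map T is upper semicontinuous in the closed-graph sense: if (t_n) and (s_n) are sequences in Θ with s_n ∈ T(t_n) for all n, t_n → t and s_n → s, then s ∈ T(t). -/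
open MeasureTheory

/-! `T` has a closed graph: `Θ` is cut out by closed conditions (a measure identity is tested on
each measurable set, where both sides depend continuously on the weights), the directions
`X_i^{(k)}(t)` are continuous in `t`, and parallelism is a closed condition on pairs of vectors. -/

open Set Filter

lemma isClosed_setOf_isParallel (N : ℕ) :
    IsClosed {v : (Fin N → ℝ) × (Fin N → ℝ) | IsParallel v.1 v.2} := by
  simp only [IsParallel, ofPred_forall]
  exact isClosed_iInter fun a => isClosed_iInter fun b =>
    isClosed_eq (by fun_prop) (by fun_prop)

lemma isClosed_setOf_sum_smul_dirac_eq {ι α : Type*} [Fintype ι] [MeasurableSpace α]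
    (x : ι → α) (μ : Measure α) :
    IsClosed {t : ι → ℝ | ∑ j, ENNReal.ofReal (t j) • Measure.dirac (x j) = μ} := by
  have hclosed (A : Set α) :
      IsClosed {t : ι → ℝ | ∑ j, ENNReal.ofReal (t j) * Measure.dirac (x j) A = μ A} :=
    isClosed_eq (continuous_finsetSum _ fun j _ =>
      (ENNReal.continuous_mul_const (measure_ne_top _ A)).comp
        (ENNReal.continuous_ofReal.comp (continuous_apply j))) continuous_const
  convert isClosed_iInter fun A => isClosed_iInter fun (_ : MeasurableSet A) => hclosed A
  ext t
  simp only [mem_ofPred_eq, mem_iInter, Measure.ext_iff, Measure.finsetSum_apply,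
    Measure.smul_apply, smul_eq_mul]

section Continuity

variable {N p : ℕ} (x : Fin (2 ^ (p + 1)) → Fin N → ℝ)

lemma continuous_leaf (r : Fin (2 ^ p)) : Continuous fun t => leaf x t r := by
  unfold leaf; fun_prop

lemma continuous_lev (k : ℕ) (i : Fin (2 ^ k)) : Continuous fun t => lev x t k i := by
  unfold lev
  split_ifs
  · exact (continuous_finsetSum _ fun j _ => continuous_leaf x _).const_smul
      ((2 : ℝ) ^ (p - k))⁻¹
  · exact continuous_const

lemma continuous_dir (k : ℕ) (i : Fin (2 ^ k)) : Continuous fun t => dir x t k i :=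
  (continuous_lev x _ _).sub (continuous_lev x _ _)

end Continuity

lemma isClosed_theta {N p : ℕ} (x : Fin (2 ^ (p + 1)) → Fin N → ℝ) (μ : Measure (Fin N → ℝ)) :
    IsClosed (Theta x μ) := by
  have hnonneg : IsClosed {t : Fin (2 ^ (p + 1)) → ℝ | ∀ j, 0 ≤ t j} := by
    simp only [ofPred_forall]
    exact isClosed_iInter fun j => isClosed_le continuous_const (continuous_apply j)
  have hpairs : IsClosed
      {t : Fin (2 ^ (p + 1)) → ℝ | ∀ i : Fin (2 ^ p), t (lo i) + t (hi i) = ((2 : ℝ) ^ p)⁻¹} := by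
    simp only [ofPred_forall]
    exact isClosed_iInter fun i => isClosed_eq (by fun_prop) continuous_const
  exact hnonneg.inter (hpairs.inter (isClosed_setOf_sum_smul_dirac_eq x μ))

lemma isClosed_graph_tmap {N p : ℕ} (x y : Fin (2 ^ (p + 1)) → Fin N → ℝ)
    (μ : Measure (Fin N → ℝ)) :
    IsClosed {q : (Fin (2 ^ (p + 1)) → ℝ) × (Fin (2 ^ (p + 1)) → ℝ) | q.2 ∈ Tmap x y μ q.1} := by
  have hparallel (k : ℕ) (i : Fin (2 ^ k)) :
      IsClosed {q : (Fin (2 ^ (p + 1)) → ℝ) × (Fin (2 ^ (p + 1)) → ℝ) |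
        IsParallel (dir y q.2 k i) (dir x q.1 k i)} :=
    (isClosed_setOf_isParallel N).preimage
      (((continuous_dir y k i).comp continuous_snd).prodMk
        ((continuous_dir x k i).comp continuous_fst))
  convert ((isClosed_theta x μ).preimage continuous_snd).inter <|
    isClosed_iInter fun k => isClosed_iInter fun (_ : k < p) => isClosed_iInter (hparallel k)
  ext q
  simp only [Tmap, mem_ofPred_eq, mem_inter_iff, mem_preimage, mem_iInter]

theorem tmap_upper_semicontinuous_general
    (p N : ℕ)
    (x y : Fin (2 ^ (p + 1)) → Fin N → ℝ)
    (μ : Measure (Fin N → ℝ))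
    (tSeq sSeq : ℕ → (Fin (2 ^ (p + 1)) → ℝ)) (t s : Fin (2 ^ (p + 1)) → ℝ)
    (hsSeq : ∀ n, sSeq n ∈ Tmap x y μ (tSeq n))
    (htlim : Filter.Tendsto tSeq Filter.atTop (nhds t))
    (hslim : Filter.Tendsto sSeq Filter.atTop (nhds s)) :
    s ∈ Tmap x y μ t :=
  (isClosed_graph_tmap x y μ).mem_of_tendsto (htlim.prodMk_nhds hslim)
    (Eventually.of_forall hsSeq)

/-- Upper semicontinuity of the map `T` in the closed-graph sense. -/
theorem tmap_upper_semicontinuous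
    (p N : ℕ) (hp : 1 ≤ p) (hN : 1 ≤ N)
    (x y : Fin (2 ^ (p + 1)) → Fin N → ℝ)
    (μ : Measure (Fin N → ℝ)) [IsFiniteMeasure μ]
    (tSeq sSeq : ℕ → (Fin (2 ^ (p + 1)) → ℝ)) (t s : Fin (2 ^ (p + 1)) → ℝ)
    (htSeq : ∀ n, tSeq n ∈ Theta x μ)
    (hsSeq : ∀ n, sSeq n ∈ Tmap x y μ (tSeq n))
    (htlim : Filter.Tendsto tSeq Filter.atTop (nhds t))
    (hslim : Filter.Tendsto sSeq Filter.atTop (nhds s)) :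
    s ∈ Tmap x y μ t :=
  tmap_upper_semicontinuous_general p N x y μ tSeq sSeq t s hsSeq htlim hslim
end

section
/- Fix integers m ≥ 2, N ≥ 1, points x₁, …, x_{2^m} ∈ ℝ^N and y₁, …, y_{2^m} ∈ ℝ^N such that y_{2i−1} − y_{2i} is parallel to x_{2i−1} − x_{2i} for every 1 ≤ i ≤ 2^{m−1}. Let t ∈ ℝ^{2^m} satisfy t_j ≥ 0 and t_{2i−1} + t_{2i} = 2^{1−m} for all 1 ≤ i ≤ 2^{m−1}, and suppose t is a joint fixed point in the sense that Y_i^{(k)}(t) is parallel to X_i^{(k)}(t) for all 0 ≤ k ≤ m−2 and 1 ≤ i ≤ 2^k. For 1 ≤ j ≤ 2^m let F_j ∈ M^{2×N} be the matrix whose first row is x_j and whose second row is y_j, and set F̄ = Σ_j t_j·F_j. Then for every continuous rank-one convex function ψ : M^{2×N} → ℝ, ψ(F̄) ≤ Σ_j t_j·ψ(F_j); that is, the probability measure Σ_j t_j·δ_{F_j} is a laminate. -/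
open MeasureTheory

/-- A function `ψ` on 2×N matrices is rank-one convex. -/
def RankOneConvex {N : ℕ} (ψ : Matrix (Fin 2) (Fin N) ℝ → ℝ) : Prop :=
  ∀ r ∈ Set.Icc (0 : ℝ) 1, ∀ F₁ F₂ : Matrix (Fin 2) (Fin N) ℝ,
    (F₁ - F₂).rank ≤ 1 → ψ (r • F₁ + (1 - r) • F₂) ≤ r * ψ F₁ + (1 - r) * ψ F₂

/-! A joint fixed point lets the measure be split down the dyadic tree: the matrix built from
the level-`k` vectors at node `i` is the midpoint of its two children, and the difference of
the children has rows `X_i^{(k)}` and `Y_i^{(k)}`, hence rank at most one by the fixed-point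
condition. At the leaves, each level-`m−1` matrix is a convex combination of `F_{2i−1}` and
`F_{2i}`, whose difference again has rank at most one. Rank-one convexity applied at every
node, read from the root `F̄` to the leaves, gives `ψ(F̄) ≤ Σ_j t_j ψ(F_j)`. -/

@[simp] lemma val_lo {n : ℕ} (i : Fin n) : (lo i : ℕ) = 2 * i := rfl

@[simp] lemma val_hi {n : ℕ} (i : Fin n) : (hi i : ℕ) = 2 * i + 1 := rfl

lemma sum_lo_add_hi {M : Type*} [AddCommMonoid M] {k : ℕ} (f : Fin (2 ^ (k + 1)) → M) :
    ∑ i : Fin (2 ^ k), (f (lo i) + f (hi i)) = ∑ j, f j := by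
  rw [← (finProdFinEquiv.trans (finCongr (pow_succ 2 k).symm)).sum_comp, Fintype.sum_prod_type]
  refine Finset.sum_congr rfl fun i _ => ?_
  rw [Fin.sum_univ_two]
  congr 2 <;> ext <;> simp [add_comm]

lemma root_le_average_of_le_midpoint {g : (k : ℕ) → Fin (2 ^ k) → ℝ} {n : ℕ}
    (hg : ∀ k < n, ∀ i, g k i ≤ (g (k + 1) (lo i) + g (k + 1) (hi i)) / 2) :
    g 0 0 ≤ ((2 : ℝ) ^ n)⁻¹ * ∑ i, g n i := by
  suffices ∀ k ≤ n, g 0 0 ≤ ((2 : ℝ) ^ k)⁻¹ * ∑ i, g k i from this n le_rfl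
  intro k hk
  induction k with
  | zero => simp
  | succ k ih =>
    calc g 0 0 ≤ ((2 : ℝ) ^ k)⁻¹ * ∑ i, g k i := ih (by omega)
      _ ≤ ((2 : ℝ) ^ k)⁻¹ * ∑ i, (g (k + 1) (lo i) + g (k + 1) (hi i)) / 2 := by
        gcongr with i; exact hg k (by omega) i
      _ = ((2 : ℝ) ^ k)⁻¹ * ((∑ j, g (k + 1) j) / 2) := by
        rw [← Finset.sum_div]; exact congrArg _ (congrArg (· / 2) (sum_lo_add_hi _))
      _ = ((2 : ℝ) ^ (k + 1))⁻¹ * ∑ j, g (k + 1) j := by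
        rw [pow_succ (2 : ℝ)]; ring

lemma IsParallel.exists_mem_span_singleton {N : ℕ} {X Y : Fin N → ℝ} (h : IsParallel Y X) :
    ∃ v, X ∈ Submodule.span ℝ {v} ∧ Y ∈ Submodule.span ℝ {v} := by
  by_cases hX : X = 0
  · exact ⟨Y, by simp [hX], Submodule.mem_span_singleton_self Y⟩
  obtain ⟨a, ha⟩ := Function.ne_iff.mp hX
  refine ⟨X, Submodule.mem_span_singleton_self X, Submodule.mem_span_singleton.mpr
    ⟨Y a / X a, funext fun b => ?_⟩⟩
  have hab := h a b
  simp only [Pi.smul_apply, smul_eq_mul, Pi.zero_apply] at ha ⊢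
  field_simp
  linarith

lemma rank_le_one_of_isParallel {N : ℕ} {X Y : Fin N → ℝ} (h : IsParallel Y X) :
    (Matrix.of ![X, Y]).rank ≤ 1 := by
  obtain ⟨v, hX, hY⟩ := h.exists_mem_span_singleton
  have hrows : Submodule.span ℝ (Set.range (Matrix.of ![X, Y]).row) ≤ Submodule.span ℝ {v} := by
    rw [Submodule.span_le, Set.range_subset_iff]
    intro i
    fin_cases i
    · exact hX
    · exact hY
  rw [Matrix.rank_eq_finrank_span_row]
  exact (Submodule.finrank_mono hrows).trans ((finrank_span_le_card _).trans (by simp))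

lemma RankOneConvex.apply_add_le {N : ℕ} {ψ : Matrix (Fin 2) (Fin N) ℝ → ℝ}
    (hψ : RankOneConvex ψ) {a b : ℝ} (ha : 0 ≤ a) (hb : 0 ≤ b) (hab : a + b = 1)
    {F₁ F₂ : Matrix (Fin 2) (Fin N) ℝ} (hF : (F₁ - F₂).rank ≤ 1) :
    ψ (a • F₁ + b • F₂) ≤ a * ψ F₁ + b * ψ F₂ := by
  obtain rfl : b = 1 - a := by linarith
  exact hψ a ⟨ha, by linarith⟩ F₁ F₂ hF

section Tree

variable {N p : ℕ} (x y : Fin (2 ^ (p + 1)) → Fin N → ℝ) {t : Fin (2 ^ (p + 1)) → ℝ}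

-- lets the blocks summed in `lev` be written as sums over `Finset.range`
noncomputable def leafNat (t : Fin (2 ^ (p + 1)) → ℝ) (n : ℕ) : Fin N → ℝ :=
  if h : n < 2 ^ p then leaf x t ⟨n, h⟩ else 0

lemma lev_eq_sum_range {k : ℕ} (hk : k ≤ p) (i : Fin (2 ^ k)) :
    lev x t k i = ((2 : ℝ) ^ (p - k))⁻¹ •
      ∑ n ∈ Finset.range (2 ^ (p - k)), leafNat x t (i * 2 ^ (p - k) + n) := by
  rw [lev, dif_pos hk, ← Fin.sum_univ_eq_sum_range]
  congr 1
  refine Finset.sum_congr rfl fun j _ => ?_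
  rw [leafNat, dif_pos]

lemma lev_self (i : Fin (2 ^ p)) : lev x t p i = leaf x t i := by
  simp [lev_eq_sum_range x le_rfl i, leafNat]

lemma lev_eq_midpoint {k : ℕ} (hk : k < p) (i : Fin (2 ^ k)) :
    lev x t k i = (2 : ℝ)⁻¹ • (lev x t (k + 1) (lo i) + lev x t (k + 1) (hi i)) := by
  obtain ⟨d, hd⟩ : ∃ d, p - k = d + 1 := ⟨p - (k + 1), by omega⟩
  have hd' : p - (k + 1) = d := by omega
  rw [lev_eq_sum_range x hk.le i, lev_eq_sum_range x hk (lo i),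
    lev_eq_sum_range x hk (hi i), hd, hd', show 2 ^ (d + 1) = 2 ^ d + 2 ^ d by ring,
    Finset.sum_range_add, smul_add, smul_add, smul_smul, smul_smul, val_lo, val_hi]
  congr 1 <;> congr 1
  · ring
  · exact Finset.sum_congr rfl fun n _ => by ring_nf
  · ring
  · exact Finset.sum_congr rfl fun n _ => by ring_nf

lemma leaf_eq_of_add_eq {r : Fin (2 ^ p)} (ht : t (lo r) + t (hi r) = ((2 : ℝ) ^ p)⁻¹) :
    leaf x t r = (2 ^ p * t (lo r)) • x (lo r) + (2 ^ p * t (hi r)) • x (hi r) := by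
  have h : 1 - 2 ^ p * t (hi r) = 2 ^ p * t (lo r) := by
    field_simp at ht; linarith
  rw [leaf, h]

lemma lev_zero (i : Fin (2 ^ 0)) : lev x t 0 i = ((2 : ℝ) ^ p)⁻¹ • ∑ r, leaf x t r := by
  rw [lev_eq_sum_range x p.zero_le, ← Fin.sum_univ_eq_sum_range]
  simp [leafNat]

lemma lev_zero_eq_sum (ht : ∀ r : Fin (2 ^ p), t (lo r) + t (hi r) = ((2 : ℝ) ^ p)⁻¹)
    (i : Fin (2 ^ 0)) : lev x t 0 i = ∑ j, t j • x j := by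
  rw [lev_zero, Finset.smul_sum, ← sum_lo_add_hi]
  refine Finset.sum_congr rfl fun r _ => ?_
  rw [leaf_eq_of_add_eq x (ht r), smul_add, smul_smul, smul_smul, ← mul_assoc, ← mul_assoc,
    inv_mul_cancel₀ (by positivity), one_mul, one_mul]

variable (t)

noncomputable def levMatrix (k : ℕ) (i : Fin (2 ^ k)) : Matrix (Fin 2) (Fin N) ℝ :=
  Matrix.of ![lev x t k i, lev y t k i]

lemma levMatrix_eq_midpoint {k : ℕ} (hk : k < p) (i : Fin (2 ^ k)) :
    levMatrix x y t k i =
      (2 : ℝ)⁻¹ • levMatrix x y t (k + 1) (lo i) + (2 : ℝ)⁻¹ • levMatrix x y t (k + 1) (hi i) := by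
  ext a b
  fin_cases a <;> simp [levMatrix, lev_eq_midpoint _ hk]

lemma levMatrix_sub_levMatrix (k : ℕ) (i : Fin (2 ^ k)) :
    levMatrix x y t (k + 1) (lo i) - levMatrix x y t (k + 1) (hi i) =
      Matrix.of ![dir x t k i, dir y t k i] := by
  ext a b
  fin_cases a <;> simp [levMatrix, dir]

lemma levMatrix_self_eq {r : Fin (2 ^ p)} (ht : t (lo r) + t (hi r) = ((2 : ℝ) ^ p)⁻¹) :
    levMatrix x y t p r = (2 ^ p * t (lo r)) • Matrix.of ![x (lo r), y (lo r)] +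
      (2 ^ p * t (hi r)) • Matrix.of ![x (hi r), y (hi r)] := by
  ext a b
  fin_cases a <;> simp [levMatrix, lev_self, leaf_eq_of_add_eq _ ht]

lemma levMatrix_zero_eq_sum (ht : ∀ r : Fin (2 ^ p), t (lo r) + t (hi r) = ((2 : ℝ) ^ p)⁻¹)
    (i : Fin (2 ^ 0)) : levMatrix x y t 0 i = ∑ j, t j • Matrix.of ![x j, y j] := by
  ext a b
  fin_cases a <;> simp [levMatrix, lev_zero_eq_sum _ ht, Matrix.sum_apply, Finset.sum_apply]

variable {x y t} {ψ : Matrix (Fin 2) (Fin N) ℝ → ℝ}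

lemma RankOneConvex.levMatrix_le_midpoint (hψ : RankOneConvex ψ) {k : ℕ} (hk : k < p)
    {i : Fin (2 ^ k)} (hpar : IsParallel (dir y t k i) (dir x t k i)) :
    ψ (levMatrix x y t k i) ≤
      (ψ (levMatrix x y t (k + 1) (lo i)) + ψ (levMatrix x y t (k + 1) (hi i))) / 2 := by
  have h := hψ.apply_add_le (a := 2⁻¹) (b := 2⁻¹) (by norm_num) (by norm_num) (by norm_num)
    ((levMatrix_sub_levMatrix x y t k i).symm ▸ rank_le_one_of_isParallel hpar)
  rw [levMatrix_eq_midpoint x y t hk]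
  linarith

lemma RankOneConvex.levMatrix_self_le (hψ : RankOneConvex ψ) (ht0 : ∀ j, 0 ≤ t j)
    {r : Fin (2 ^ p)} (ht : t (lo r) + t (hi r) = ((2 : ℝ) ^ p)⁻¹)
    (hpar : IsParallel (y (lo r) - y (hi r)) (x (lo r) - x (hi r))) :
    ψ (levMatrix x y t p r) ≤ 2 ^ p * (t (lo r) * ψ (Matrix.of ![x (lo r), y (lo r)]) +
      t (hi r) * ψ (Matrix.of ![x (hi r), y (hi r)])) := by
  have hsum : 2 ^ p * t (lo r) + 2 ^ p * t (hi r) = 1 := by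
    rw [← mul_add, ht, mul_inv_cancel₀ (by positivity)]
  have hrank : (Matrix.of ![x (lo r), y (lo r)] - Matrix.of ![x (hi r), y (hi r)]).rank ≤ 1 := by
    simpa [Matrix.of_sub_of] using rank_le_one_of_isParallel hpar
  rw [levMatrix_self_eq x y t ht, mul_add, ← mul_assoc, ← mul_assoc]
  exact hψ.apply_add_le (mul_nonneg (by positivity) (ht0 _)) (mul_nonneg (by positivity) (ht0 _))
    hsum hrank

end Tree

theorem fixed_point_gives_laminate_general
    (p N : ℕ)
    (x y : Fin (2 ^ (p + 1)) → Fin N → ℝ)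
    (hleaf : ∀ i : Fin (2 ^ p), IsParallel (y (lo i) - y (hi i)) (x (lo i) - x (hi i)))
    (t : Fin (2 ^ (p + 1)) → ℝ)
    (ht0 : ∀ j, 0 ≤ t j)
    (hts : ∀ i : Fin (2 ^ p), t (lo i) + t (hi i) = ((2 : ℝ) ^ p)⁻¹)
    (hfix : ∀ k < p, ∀ i : Fin (2 ^ k), IsParallel (dir y t k i) (dir x t k i))
    (F : Fin (2 ^ (p + 1)) → Matrix (Fin 2) (Fin N) ℝ)
    (hF : ∀ j, F j = Matrix.of ![x j, y j])
    (Fbar : Matrix (Fin 2) (Fin N) ℝ) (hFbar : Fbar = ∑ j, t j • F j) :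
    ∀ ψ : Matrix (Fin 2) (Fin N) ℝ → ℝ, Continuous ψ → RankOneConvex ψ →
      ψ Fbar ≤ ∑ j, t j * ψ (F j) := by
  intro ψ _ hψ
  obtain rfl : F = fun j => Matrix.of ![x j, y j] := funext hF
  have hroot : Fbar = levMatrix x y t 0 0 := by
    rw [hFbar, levMatrix_zero_eq_sum x y t hts]
  calc ψ Fbar
      ≤ ((2 : ℝ) ^ p)⁻¹ * ∑ r, ψ (levMatrix x y t p r) := hroot ▸
        root_le_average_of_le_midpoint (g := fun k i => ψ (levMatrix x y t k i))
          fun k hk i => hψ.levMatrix_le_midpoint hk (hfix k hk i)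
    _ ≤ ((2 : ℝ) ^ p)⁻¹ * ∑ r : Fin (2 ^ p), 2 ^ p *
          (t (lo r) * ψ (Matrix.of ![x (lo r), y (lo r)]) +
            t (hi r) * ψ (Matrix.of ![x (hi r), y (hi r)])) := by
        gcongr with r
        exact hψ.levMatrix_self_le ht0 (hts r) (hleaf r)
    _ = ∑ j, t j * ψ (Matrix.of ![x j, y j]) := by
        rw [← Finset.mul_sum, inv_mul_cancel_left₀ (by positivity)]
        exact sum_lo_add_hi fun j => t j * ψ (Matrix.of ![x j, y j])

/-- A joint fixed point (decomposition directions of both components parallel at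
every level) produces a laminate: Jensen's inequality holds for every continuous
rank-one convex function. -/
theorem fixed_point_gives_laminate
    (p N : ℕ) (hp : 1 ≤ p) (hN : 1 ≤ N)
    (x y : Fin (2 ^ (p + 1)) → Fin N → ℝ)
    (hleaf : ∀ i : Fin (2 ^ p), IsParallel (y (lo i) - y (hi i)) (x (lo i) - x (hi i)))
    (t : Fin (2 ^ (p + 1)) → ℝ)
    (ht0 : ∀ j, 0 ≤ t j)
    (hts : ∀ i : Fin (2 ^ p), t (lo i) + t (hi i) = ((2 : ℝ) ^ p)⁻¹)
    (hfix : ∀ k < p, ∀ i : Fin (2 ^ k), IsParallel (dir y t k i) (dir x t k i))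
    (F : Fin (2 ^ (p + 1)) → Matrix (Fin 2) (Fin N) ℝ)
    (hF : ∀ j, F j = Matrix.of ![x j, y j])
    (Fbar : Matrix (Fin 2) (Fin N) ℝ) (hFbar : Fbar = ∑ j, t j • F j) :
    ∀ ψ : Matrix (Fin 2) (Fin N) ℝ → ℝ, Continuous ψ → RankOneConvex ψ →
      ψ Fbar ≤ ∑ j, t j * ψ (F j) :=
  fixed_point_gives_laminate_general p N x y hleaf t ht0 hts hfix F hF Fbar hFbar
end
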